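/- arXiv:2602.07596 — 5 statements merged into one kernel-verified Lean document; each statement's English description precedes it below -/
import Mathlib

section
/- Let b ≥ 2 be an integer, X ∈ ℝ^{N×(Kg)} a matrix whose columns are partitioned into K contiguous groups of size g with submatrices X^{(k)} ∈ ℝ^{N×g}, and w ∈ ℝ^{Kg} a vector partitioned into subvectors w^{(k)} ∈ ℝ^g, each with ‖w^{(k)}‖_∞ > 0. Let Q_g(w) denote the group-wise symmetric uniform quantization of w, obtained by applying symmetric uniform quantization with bit-width b and scale s_k = ‖w^{(k)}‖_∞/(2^{b−1} − 1) independently on each group. Then ‖X w − X Q_g(w)‖_2 ≤ (√g / (2(2^{b−1} − 1))) · Σ_{k=1}^{K} ‖X^{(k)}‖_F · ‖w^{(k)}‖_∞. -/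
/-!
Since `‖w^(k)‖_∞ = s_k (2^(b-1) - 1)`, every `w_i / s_k` lies in the representable range, so
clamping is inactive and each entry of `w - Q(w)` in group `k` is a pure rounding error of size
at most `s_k / 2`. Splitting `X (w - Q(w)) = Σ_k X^(k) (w - Q(w))^(k)`, the triangle inequality,
Cauchy–Schwarz row by row (`‖A v‖₂ ≤ ‖A‖_F ‖v‖₂`) and `‖v‖₂ ≤ √g ‖v‖_∞` give the bound.
-/

open Finset Matrix

theorem abs_sub_mul_clamp_round_div_le {x s : ℝ} {lo hi : ℤ} (hs : 0 ≤ s)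
    (hx : |x| ≤ s * hi) (hlo : lo ≤ -hi) :
    |x - s * ((min (max (round (x / s)) lo) hi : ℤ) : ℝ)| ≤ s / 2 := by
  rcases hs.eq_or_lt with rfl | hs
  · simp_all
  have hxs : |x / s| ≤ hi := by
    rwa [abs_div, abs_of_pos hs, div_le_iff₀' hs]
  obtain ⟨hx_lo, hx_hi⟩ := abs_le.mp hxs
  have hround_hi : round (x / s) ≤ hi := by
    have := round_le_add_half (x / s)
    have : (round (x / s) : ℝ) < hi + 1 := by linarith
    exact_mod_cast Int.lt_add_one_iff.mp (by exact_mod_cast this)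
  have hround_lo : lo ≤ round (x / s) := by
    have := sub_half_lt_round (x / s)
    have : ((lo : ℤ) : ℝ) - 1 < round (x / s) := by
      have : ((lo : ℤ) : ℝ) ≤ -hi := by exact_mod_cast hlo
      linarith
    exact Int.sub_one_lt_iff.mp (by exact_mod_cast this)
  rw [max_eq_left hround_lo, min_eq_left hround_hi]
  calc |x - s * round (x / s)| = s * |x / s - round (x / s)| := by
        rw [← abs_of_pos hs, ← abs_mul, abs_of_pos hs, mul_sub, mul_div_cancel₀ x hs.ne']
    _ ≤ s * (1 / 2) := by gcongr; exact abs_sub_round _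
    _ = s / 2 := by ring

theorem sqrt_sum_sq_le_sqrt_card_mul {ι : Type*} [Fintype ι] {v : ι → ℝ} {c : ℝ} (hc : 0 ≤ c)
    (hv : ∀ i, |v i| ≤ c) :
    √(∑ i, v i ^ 2) ≤ √(Fintype.card ι) * c := by
  rw [← Real.sqrt_sq hc, ← Real.sqrt_mul (Nat.cast_nonneg _)]
  refine Real.sqrt_le_sqrt ?_
  calc ∑ i, v i ^ 2 ≤ ∑ _i : ι, c ^ 2 :=
        sum_le_sum fun i _ => sq_le_sq' (abs_le.mp (hv i)).1 (abs_le.mp (hv i)).2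
    _ = _ := by simp

theorem Matrix.sqrt_sum_sq_mulVec_le {m n : Type*} [Fintype m] [Fintype n]
    (A : Matrix m n ℝ) (v : n → ℝ) :
    √(∑ i, (A *ᵥ v) i ^ 2) ≤ √(∑ i, ∑ j, A i j ^ 2) * √(∑ j, v j ^ 2) := by
  rw [← Real.sqrt_mul (by positivity), sum_mul]
  exact Real.sqrt_le_sqrt (sum_le_sum fun i _ => sum_mul_sq_le_sq_mul_sq _ _ _)

theorem sqrt_sum_sq_sum_le_sum_sqrt {ι m : Type*} [Fintype m] (s : Finset ι) (f : ι → m → ℝ) :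
    √(∑ i, (∑ k ∈ s, f k i) ^ 2) ≤ ∑ k ∈ s, √(∑ i, f k i ^ 2) := by
  have := norm_sum_le s fun k => WithLp.toLp 2 (f k)
  simpa [EuclideanSpace.norm_eq, ← WithLp.toLp_sum] using this

theorem Matrix.mulVec_eq_sum_submatrix_mulVec_curry {m κ ι R : Type*} [Fintype κ] [Fintype ι]
    [NonUnitalNonAssocSemiring R] (A : Matrix m (κ × ι) R) (v : κ × ι → R) :
    A *ᵥ v = ∑ k, A.submatrix id (Prod.mk k) *ᵥ Function.curry v k := by
  ext i
  simp [Matrix.mulVec, dotProduct, Fintype.sum_prod_type]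

theorem groupwise_quantization_matvec_error_bound_general
    (N K g b : ℕ) (hb : 2 ≤ b)
    (X : Matrix (Fin N) (Fin K × Fin g) ℝ)
    (w : Fin K × Fin g → ℝ)
    (s : Fin K → ℝ)
    (hs : ∀ k, s k = ‖(fun j : Fin g => w (k, j))‖ / (2 ^ (b - 1) - 1))
    (Qw : Fin K × Fin g → ℝ)
    (hQ : ∀ (k : Fin K) (j : Fin g),
      Qw (k, j) = s k *
        ((min (max (round (w (k, j) / s k)) (-(2 ^ (b - 1)) : ℤ)) ((2 ^ (b - 1) - 1 : ℤ)) : ℤ) : ℝ)) :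
    Real.sqrt (∑ n, (X.mulVec w n - X.mulVec Qw n) ^ 2) ≤
      Real.sqrt g / (2 * ((2 : ℝ) ^ (b - 1) - 1)) *
        ∑ k : Fin K,
          Real.sqrt (∑ n, ∑ j, (X n (k, j)) ^ 2) * ‖(fun j : Fin g => w (k, j))‖ := by
  have hM : (0 : ℝ) < 2 ^ (b - 1) - 1 := by
    have : (2 : ℝ) ^ 1 ≤ 2 ^ (b - 1) := pow_le_pow_right₀ one_le_two (by omega)
    linarith
  have hs_nonneg : ∀ k, 0 ≤ s k := fun k => hs k ▸ by positivity
  have hQ_err : ∀ k j, |w (k, j) - Qw (k, j)| ≤ s k / 2 := fun k j => by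
    rw [hQ]
    refine abs_sub_mul_clamp_round_div_le (hs_nonneg k) ?_ (by omega)
    rw [hs, Int.cast_sub, Int.cast_pow, Int.cast_ofNat, Int.cast_one, div_mul_cancel₀ _ hM.ne']
    exact norm_le_pi_norm (fun j => w (k, j)) j
  calc √(∑ n, ((X *ᵥ w) n - (X *ᵥ Qw) n) ^ 2)
      = √(∑ n, (∑ k, X.submatrix id (Prod.mk k) *ᵥ Function.curry (w - Qw) k) n ^ 2) := by
        simp only [← Pi.sub_apply (X *ᵥ w), ← mulVec_sub, ← mulVec_eq_sum_submatrix_mulVec_curry]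
    _ ≤ ∑ k, √(∑ n, (X.submatrix id (Prod.mk k) *ᵥ Function.curry (w - Qw) k) n ^ 2) := by
        simpa only [Finset.sum_apply] using sqrt_sum_sq_sum_le_sum_sqrt _ _
    _ ≤ ∑ k, √(∑ n, ∑ j, X n (k, j) ^ 2) * (√g * (s k / 2)) := by
        gcongr with k
        refine (sqrt_sum_sq_mulVec_le _ _).trans (mul_le_mul_of_nonneg_left ?_ (Real.sqrt_nonneg _))
        simpa using sqrt_sum_sq_le_sqrt_card_mul (div_nonneg (hs_nonneg k) zero_le_two) (hQ_err k)
    _ = _ := by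
        rw [mul_sum]
        refine sum_congr rfl fun k _ => ?_
        rw [hs]
        field_simp

/-- Let `b ≥ 2`, `X ∈ ℝ^{N×(K·g)}` with columns partitioned into `K` groups of size `g`
(columns indexed by `Fin K × Fin g`), and `w ∈ ℝ^{K·g}` partitioned into group subvectors
`w^(k) = fun j => w (k, j)`, each with `‖w^(k)‖_∞ > 0` (sup norm on `Fin g → ℝ`). Let `Qw`
be the group-wise symmetric uniform quantization of `w` with bit-width `b` and per-group
scale `s k = ‖w^(k)‖_∞ / (2^(b-1) - 1)`. Then
`‖X w - X Qw‖₂ ≤ (√g / (2 (2^(b-1) - 1))) Σ_k ‖X^(k)‖_F ‖w^(k)‖_∞`. -/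
theorem groupwise_quantization_matvec_error_bound
    (N K g b : ℕ) (hb : 2 ≤ b)
    (X : Matrix (Fin N) (Fin K × Fin g) ℝ)
    (w : Fin K × Fin g → ℝ)
    (hw : ∀ k : Fin K, 0 < ‖(fun j : Fin g => w (k, j))‖)
    (s : Fin K → ℝ)
    (hs : ∀ k, s k = ‖(fun j : Fin g => w (k, j))‖ / (2 ^ (b - 1) - 1))
    (Qw : Fin K × Fin g → ℝ)
    (hQ : ∀ (k : Fin K) (j : Fin g),
      Qw (k, j) = s k *
        ((min (max (round (w (k, j) / s k)) (-(2 ^ (b - 1)) : ℤ)) ((2 ^ (b - 1) - 1 : ℤ)) : ℤ) : ℝ)) :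
    Real.sqrt (∑ n, (X.mulVec w n - X.mulVec Qw n) ^ 2) ≤
      Real.sqrt g / (2 * ((2 : ℝ) ^ (b - 1) - 1)) *
        ∑ k : Fin K,
          Real.sqrt (∑ n, ∑ j, (X n (k, j)) ^ 2) * ‖(fun j : Fin g => w (k, j))‖ :=
  groupwise_quantization_matvec_error_bound_general N K g b hb X w s hs Qw hQ
end

section
/- Let b ≥ 2 be an integer, X ∈ ℝ^{N×(Kg)} an activation matrix whose columns are partitioned into K contiguous groups of size g with submatrices X^{(k)} ∈ ℝ^{N×g}, and W ∈ ℝ^{(Kg)×C_out} a weight matrix. For each output channel j and group k, let W^{(k,j)} ∈ ℝ^g be the subvector of column j of W on the rows of group k, and assume ‖W^{(k,j)}‖_∞ > 0 for all k, j. Let Q(W) be the group-wise symmetric uniform quantization of W, obtained by quantizing each subvector W^{(k,j)} with bit-width b and scale ‖W^{(k,j)}‖_∞/(2^{b−1} − 1). Then the layer-wise quantization error satisfies ‖X W − X Q(W)‖_F ≤ (√g / (2(2^{b−1} − 1))) · Σ_{j=1}^{C_out} Σ_{k=1}^{K} ‖X^{(k)}‖_F · ‖W^{(k,j)}‖_∞.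 (Theorem 4.2, Activation-Weight Coupled Error Bound.) -/
/-!
Because the scale is `s = ‖W^(k,j)‖_∞ / (2^(b-1) - 1)`, every value `round (W / s)` already lies
in the clamp range, so each entry of `W - Q` is a pure rounding error of size at most `s / 2`.
Splitting `X (W - Q)` into the block products `X^(k) (W - Q)^(k)` over the groups, the triangle
inequality and submultiplicativity of the Frobenius norm bound the error by
`Σ_k ‖X^(k)‖_F ‖(W - Q)^(k)‖_F`, and the entrywise bound gives
`‖(W - Q)^(k)‖_F ≤ √g Σ_j s_kj / 2`.
-/

open Matrix

section Round

variable {α : Type*} [Field α] [LinearOrder α] [IsStrictOrderedRing α] [FloorRing α]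

theorem round_mono : Monotone (round : α → ℤ) := fun x y hxy => by
  simp only [round_eq]
  exact Int.floor_mono (by linarith)

theorem abs_round_le_of_abs_le {y : α} {m : ℤ} (h : |y| ≤ m) : |round y| ≤ m := by
  obtain ⟨hlo, hhi⟩ := abs_le.1 h
  refine abs_le.2 ⟨?_, ?_⟩
  · have := round_mono (show ((-m : ℤ) : α) ≤ y by push_cast; exact hlo)
    rwa [round_intCast] at this
  · simpa using round_mono hhi

end Round

theorem abs_sub_mul_clamp_round_le {s x : ℝ} {lo hi : ℤ} (hs : 0 < s) (hlo : lo ≤ -hi)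
    (hx : |x| ≤ s * hi) :
    |x - s * ((min (max (round (x / s)) lo) hi : ℤ) : ℝ)| ≤ s / 2 := by
  have hy : |x / s| ≤ hi := by
    rwa [abs_div, abs_of_pos hs, div_le_iff₀ hs, mul_comm]
  obtain ⟨hl, hh⟩ := abs_le.1 (abs_round_le_of_abs_le hy)
  rw [max_eq_left (hlo.trans hl), min_eq_left hh]
  calc |x - s * round (x / s)| = s * |x / s - round (x / s)| := by
        rw [← abs_of_pos hs, ← abs_mul, abs_of_pos hs, mul_sub, mul_div_cancel₀ _ hs.ne']
    _ ≤ s * (1 / 2) := by gcongr; exact abs_sub_round _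
    _ = s / 2 := by ring

attribute [local instance] Matrix.frobeniusNormedAddCommGroup

namespace Matrix

variable {l m n κ : Type*} [Fintype m]

theorem frobenius_norm_eq_sqrt [Fintype n] (A : Matrix m n ℝ) :
    ‖A‖ = √(∑ i, ∑ j, A i j ^ 2) := by
  simp [frobenius_norm_def, Real.sqrt_eq_rpow, Real.norm_eq_abs, sq_abs]

theorem mul_eq_sum_mul_submatrix [Fintype κ] {α : Type*} [NonUnitalNonAssocSemiring α]
    (X : Matrix l (κ × m) α) (E : Matrix (κ × m) n α) :
    X * E = ∑ k, X.submatrix id (Prod.mk k) * E.submatrix (Prod.mk k) id := by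
  ext i j
  simp [mul_apply, sum_apply, Fintype.sum_prod_type]

theorem frobenius_norm_mul_le_sum_submatrix [Fintype l] [Fintype n] [Fintype κ]
    {α : Type*} [RCLike α]
    (X : Matrix l (κ × m) α) (E : Matrix (κ × m) n α) :
    ‖X * E‖ ≤ ∑ k, ‖X.submatrix id (Prod.mk k)‖ * ‖E.submatrix (Prod.mk k) id‖ := by
  rw [mul_eq_sum_mul_submatrix]
  exact (norm_sum_le _ _).trans (Finset.sum_le_sum fun k _ => frobenius_norm_mul _ _)

theorem frobenius_norm_le_sqrt_card_mul_sum [Fintype n] {A : Matrix m n ℝ} {c : n → ℝ}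
    (hc : ∀ j, 0 ≤ c j) (hA : ∀ i j, |A i j| ≤ c j) :
    ‖A‖ ≤ √(Fintype.card m) * ∑ j, c j := by
  rw [frobenius_norm_eq_sqrt]
  calc √(∑ i, ∑ j, A i j ^ 2) ≤ √(∑ _i : m, ∑ j, c j ^ 2) := by
        refine Real.sqrt_le_sqrt (Finset.sum_le_sum fun i _ => Finset.sum_le_sum fun j _ => ?_)
        exact sq_le_sq.2 ((hA i j).trans (le_abs_self _))
    _ = √(Fintype.card m) * √(∑ j, c j ^ 2) := by
        rw [Finset.sum_const, Finset.card_univ, nsmul_eq_mul, Real.sqrt_mul (Nat.cast_nonneg _)]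
    _ ≤ √(Fintype.card m) * ∑ j, c j := by
        gcongr
        exact (Real.sqrt_le_left (Finset.sum_nonneg fun j _ => hc j)).2
          (Finset.sum_sq_le_sq_sum_of_nonneg fun j _ => hc j)

end Matrix

/-- **Theorem 4.2 (Activation-Weight Coupled Error Bound).**
Let `b ≥ 2`, `X ∈ ℝ^{N×(K·g)}` an activation matrix with columns partitioned into `K`
contiguous groups of size `g` (indexed by `Fin K × Fin g`), and `W ∈ ℝ^{(K·g)×C_out}` a
weight matrix. For each output channel `j` and group `k`, `W^(k,j) = fun i => W (k, i) j`
is the corresponding subvector (with `‖·‖` the sup norm on `Fin g → ℝ`), assumed nonzero.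
Let `Q` be the group-wise symmetric uniform quantization of `W` with bit-width `b` and
scales `s k j = ‖W^(k,j)‖_∞ / (2^(b-1) - 1)`. Then the layer-wise quantization error
satisfies
`‖X W - X Q‖_F ≤ (√g / (2 (2^(b-1) - 1))) Σ_j Σ_k ‖X^(k)‖_F ‖W^(k,j)‖_∞`. -/
theorem activation_weight_coupled_error_bound
    (N K g Cout b : ℕ) (hb : 2 ≤ b)
    (X : Matrix (Fin N) (Fin K × Fin g) ℝ)
    (W : Matrix (Fin K × Fin g) (Fin Cout) ℝ)
    (hW : ∀ (k : Fin K) (j : Fin Cout), 0 < ‖(fun i : Fin g => W (k, i) j)‖)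
    (s : Fin K → Fin Cout → ℝ)
    (hs : ∀ k j, s k j = ‖(fun i : Fin g => W (k, i) j)‖ / (2 ^ (b - 1) - 1))
    (Q : Matrix (Fin K × Fin g) (Fin Cout) ℝ)
    (hQ : ∀ (k : Fin K) (i : Fin g) (j : Fin Cout),
      Q (k, i) j = s k j *
        ((min (max (round (W (k, i) j / s k j)) (-(2 ^ (b - 1)) : ℤ))
            ((2 ^ (b - 1) - 1 : ℤ)) : ℤ) : ℝ)) :
    Real.sqrt (∑ n, ∑ j, ((X * W) n j - (X * Q) n j) ^ 2) ≤
      Real.sqrt g / (2 * ((2 : ℝ) ^ (b - 1) - 1)) *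
        ∑ j : Fin Cout, ∑ k : Fin K,
          Real.sqrt (∑ n, ∑ i, (X n (k, i)) ^ 2) * ‖(fun i : Fin g => W (k, i) j)‖ := by
  have hM : (0 : ℝ) < 2 ^ (b - 1) - 1 := by
    linarith [le_self_pow₀ (one_le_two (α := ℝ)) (show b - 1 ≠ 0 by omega)]
  have hs_pos : ∀ k j, 0 < s k j := fun k j => (hs k j).symm ▸ div_pos (hW k j) hM
  have herr : ∀ k i j, |(W - Q) (k, i) j| ≤ s k j / 2 := by
    intro k i j
    rw [Matrix.sub_apply, hQ]
    refine abs_sub_mul_clamp_round_le (hs_pos k j) (by omega) ?_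
    rw [hs, Int.cast_sub, Int.cast_pow, Int.cast_ofNat, Int.cast_one, div_mul_cancel₀ _ hM.ne']
    exact norm_le_pi_norm (fun i => W (k, i) j) i
  calc √(∑ n, ∑ j, ((X * W) n j - (X * Q) n j) ^ 2) = ‖X * (W - Q)‖ := by
        rw [frobenius_norm_eq_sqrt, Matrix.mul_sub]; rfl
    _ ≤ ∑ k, ‖X.submatrix id (Prod.mk k)‖ * ‖(W - Q).submatrix (Prod.mk k) id‖ :=
        frobenius_norm_mul_le_sum_submatrix _ _
    _ ≤ ∑ k, ‖X.submatrix id (Prod.mk k)‖ * (√g * ∑ j, s k j / 2) := by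
        gcongr with k
        simpa only [Fintype.card_fin] using frobenius_norm_le_sqrt_card_mul_sum
          (A := (W - Q).submatrix (Prod.mk k) id) (fun j => (half_pos (hs_pos k j)).le)
          fun i j => herr k i j
    _ = _ := by
        simp only [frobenius_norm_eq_sqrt, submatrix_apply, id, hs, Finset.mul_sum]
        rw [Finset.sum_comm]
        refine Finset.sum_congr rfl fun j _ => Finset.sum_congr rfl fun k _ => ?_
        field_simp
end

section
/- Let v ∈ ℝ^g and r > 0 with ‖v‖_1 > r. Then there exists a unique θ > 0 such that Σ_{i=1}^{g} max(|v_i| − θ, 0) = r. -/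
/-- Let `v ∈ ℝ^g` and `r > 0` with `‖v‖₁ > r`. Then there exists a unique `θ > 0` such
that `Σ_i max (|v i| - θ) 0 = r` (the soft-thresholding level for the Euclidean
projection onto the `L1`-ball of radius `r`). -/
theorem soft_threshold_exists_unique
    (g : ℕ) (v : Fin g → ℝ) (r : ℝ) (hr : 0 < r) (hv : r < ∑ i, |v i|) :
    ∃! θ : ℝ, 0 < θ ∧ (∑ i, max (|v i| - θ) 0) = r := by
  have hcont : Continuous (fun θ : ℝ => ∑ i, max (|v i| - θ) 0) := by
    apply continuous_finset_sum
    intro i _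
    exact (continuous_const.sub continuous_id).max continuous_const
  have hf0 : (∑ i, max (|v i| - (0:ℝ)) 0) = ∑ i, |v i| := by
    refine Finset.sum_congr rfl fun i _ => ?_
    rw [sub_zero, max_eq_left (abs_nonneg _)]
  set B := ∑ i, |v i| with hB
  have hfB : (∑ i, max (|v i| - B) 0) = 0 := by
    refine Finset.sum_eq_zero fun i _ => ?_
    have h1 : |v i| ≤ B := Finset.single_le_sum (fun j _ => abs_nonneg (v j))
      (Finset.mem_univ i)
    exact max_eq_right (by linarith)
  have h0B : (0:ℝ) ≤ B := le_of_lt (lt_trans hr hv)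
  have hIVT := intermediate_value_Icc' h0B hcont.continuousOn
  have hrmem : r ∈ Set.Icc ((fun θ : ℝ => ∑ i, max (|v i| - θ) 0) B)
      ((fun θ : ℝ => ∑ i, max (|v i| - θ) 0) 0) := by
    simp only [hfB, hf0]
    exact ⟨hr.le, hv.le⟩
  obtain ⟨θ, hθmem, hθ⟩ := hIVT hrmem
  simp only at hθ
  -- key : strict decrease while the value is positive
  have key : ∀ a b : ℝ, a < b → (∑ i, max (|v i| - b) 0) = r →
      (∑ i, max (|v i| - b) 0) < (∑ i, max (|v i| - a) 0) := by
    intro a b hab hfb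
    have hex : ∃ i, b < |v i| := by
      by_contra h
      push_neg at h
      have : (∑ i, max (|v i| - b) 0) = 0 :=
        Finset.sum_eq_zero fun i _ => max_eq_right (by linarith [h i])
      rw [hfb] at this; linarith
    obtain ⟨i, hi⟩ := hex
    refine Finset.sum_lt_sum (fun j _ => max_le_max (by linarith) le_rfl)
      ⟨i, Finset.mem_univ i, ?_⟩
    rw [max_eq_left (by linarith), max_eq_left (by linarith)]
    linarith
  have hθpos : 0 < θ := by
    rcases lt_or_eq_of_le hθmem.1 with h | h
    · exact h
    · exfalso
      rw [← h, hf0] at hθ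
      linarith
  refine ⟨θ, ⟨hθpos, hθ⟩, ?_⟩
  rintro θ' ⟨hθ'pos, hθ'⟩
  rcases lt_trichotomy θ' θ with h | h | h
  · have := key θ' θ h hθ
    rw [hθ, hθ'] at this; linarith
  · exact h
  · have := key θ θ' h hθ'
    rw [hθ, hθ'] at this; linarith
end

section
/- Let v ∈ ℝ^g and r > 0 with ‖v‖_1 > r, and suppose θ ≥ 0 satisfies Σ_{i=1}^{g} max(|v_i| − θ, 0) = r. Define w ∈ ℝ^g by w_i = sign(v_i) · max(|v_i| − θ, 0). Then w is the Euclidean projection of v onto the L1-ball { u ∈ ℝ^g : ‖u‖_1 ≤ r }, i.e., w is the unique minimizer of ‖u − v‖_2 over all u with ‖u‖_1 ≤ r. -/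
/-- Let `v ∈ ℝ^g` and `r > 0` with `‖v‖₁ > r`, and suppose `θ ≥ 0` satisfies
`Σ_i max (|v i| - θ) 0 = r`. Define `w i = sign (v i) * max (|v i| - θ) 0`. Then `w` is
the Euclidean projection of `v` onto the `L1`-ball of radius `r`: it lies in the ball and
is the unique minimizer of `‖u - v‖₂` over all `u` with `‖u‖₁ ≤ r`. -/
theorem soft_threshold_is_l1_projection
    (g : ℕ) (v : Fin g → ℝ) (r : ℝ) (hr : 0 < r) (hv : r < ∑ i, |v i|)
    (θ : ℝ) (hθ : 0 ≤ θ) (hsum : (∑ i, max (|v i| - θ) 0) = r)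
    (w : Fin g → ℝ) (hw : ∀ i, w i = Real.sign (v i) * max (|v i| - θ) 0) :
    (∑ i, |w i|) ≤ r ∧
    (∀ u : Fin g → ℝ, (∑ i, |u i|) ≤ r →
      Real.sqrt (∑ i, (w i - v i) ^ 2) ≤ Real.sqrt (∑ i, (u i - v i) ^ 2)) ∧
    (∀ u : Fin g → ℝ, (∑ i, |u i|) ≤ r →
      Real.sqrt (∑ i, (u i - v i) ^ 2) ≤ Real.sqrt (∑ i, (w i - v i) ^ 2) → u = w) := by
  -- |w i| = max (|v i| - θ) 0
  have habs : ∀ i, |w i| = max (|v i| - θ) 0 := by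
    intro i
    rw [hw i, abs_mul, abs_of_nonneg (le_max_right (|v i| - θ) 0)]
    rcases lt_trichotomy (v i) 0 with h|h|h
    · rw [Real.sign_of_neg h]; simp
    · have : max (|v i| - θ) 0 = 0 := by
        rw [h]; simp [max_eq_right]; linarith
      rw [this]; ring
    · rw [Real.sign_of_pos h]; simp
  have hwsum : (∑ i, |w i|) = r := by
    rw [← hsum]; exact Finset.sum_congr rfl fun i _ => habs i
  -- per-index cross-term bound
  have hcross : ∀ (u : Fin g → ℝ) i, θ * |w i| - θ * |u i| ≤ (u i - w i) * (w i - v i) := by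
    intro u i
    rcases le_or_gt (|v i|) θ with h|h
    · have hw0 : w i = 0 := by
        rw [hw i, max_eq_right (by linarith)]; ring
      have h1 : u i * v i ≤ |u i| * |v i| := by
        calc u i * v i ≤ |u i * v i| := le_abs_self _
        _ = |u i| * |v i| := abs_mul _ _
      have h2 : |u i| * |v i| ≤ |u i| * θ := mul_le_mul_of_nonneg_left h (abs_nonneg _)
      rw [hw0]
      simp only [abs_zero, mul_zero, sub_zero, zero_sub]
      nlinarith
    · have hm : max (|v i| - θ) 0 = |v i| - θ := max_eq_left (by linarith)
      have hu1 : -|u i| ≤ u i := neg_abs_le _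
      have hu2 : u i ≤ |u i| := le_abs_self _
      rcases lt_trichotomy (v i) 0 with hs|hs|hs
      · have : w i = Real.sign (v i) * (|v i| - θ) := by rw [hw i, hm]
        rw [Real.sign_of_neg hs, abs_of_neg hs] at this
        have hwv : |w i| = -v i - θ := by rw [habs i, hm, abs_of_neg hs]
        rw [hwv, this]; nlinarith
      · rw [hs] at h; simp at h; linarith
      · have : w i = Real.sign (v i) * (|v i| - θ) := by rw [hw i, hm]
        rw [Real.sign_of_pos hs, abs_of_pos hs] at this
        have hwv : |w i| = v i - θ := by rw [habs i, hm, abs_of_pos hs]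
        rw [hwv, this]; nlinarith
  -- key inequality
  have key : ∀ (u : Fin g → ℝ), (∑ i, |u i|) ≤ r →
      (∑ i, (w i - v i) ^ 2) + (∑ i, (u i - w i) ^ 2) ≤ ∑ i, (u i - v i) ^ 2 := by
    intro u hu
    have hid : ∀ i : Fin g, (u i - v i) ^ 2
        = (w i - v i) ^ 2 + (u i - w i) ^ 2 + 2 * ((u i - w i) * (w i - v i)) := by
      intro i; ring
    have hsum2 : (∑ i, (u i - v i) ^ 2)
        = (∑ i, (w i - v i) ^ 2) + (∑ i, (u i - w i) ^ 2)
          + 2 * ∑ i, (u i - w i) * (w i - v i) := by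
      simp only [hid]
      rw [Finset.sum_add_distrib, Finset.sum_add_distrib, Finset.mul_sum]
    have hcs : 0 ≤ ∑ i, (u i - w i) * (w i - v i) := by
      have h1 : (∑ i, (θ * |w i| - θ * |u i|)) ≤ ∑ i, (u i - w i) * (w i - v i) :=
        Finset.sum_le_sum fun i _ => hcross u i
      have h2 : (∑ i, (θ * |w i| - θ * |u i|)) = θ * r - θ * (∑ i, |u i|) := by
        rw [Finset.sum_sub_distrib, ← Finset.mul_sum, ← Finset.mul_sum, hwsum]
      have h3 : 0 ≤ θ * r - θ * (∑ i, |u i|) := by nlinarith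
      linarith
    linarith
  have hA : ∀ (x : Fin g → ℝ), 0 ≤ ∑ i, (x i - v i) ^ 2 :=
    fun x => Finset.sum_nonneg fun i _ => sq_nonneg _
  refine ⟨le_of_eq hwsum, ?_, ?_⟩
  · intro u hu
    apply Real.sqrt_le_sqrt
    have h0 : 0 ≤ ∑ i, (u i - w i) ^ 2 := Finset.sum_nonneg fun i _ => sq_nonneg _
    linarith [key u hu]
  · intro u hu hle
    have hAB : (∑ i, (u i - v i) ^ 2) ≤ ∑ i, (w i - v i) ^ 2 := by
      have h1 := Real.sq_sqrt (hA u)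
      have h2 := Real.sq_sqrt (hA w)
      nlinarith [Real.sqrt_nonneg (∑ i, (u i - v i) ^ 2),
        Real.sqrt_nonneg (∑ i, (w i - v i) ^ 2)]
    have h0 : (∑ i, (u i - w i) ^ 2) ≤ 0 := by linarith [key u hu]
    have heq : ∀ i ∈ Finset.univ, (u i - w i) ^ 2 = 0 := by
      rw [← Finset.sum_eq_zero_iff_of_nonneg fun i _ => sq_nonneg (u i - w i)]
      exact le_antisymm h0 (Finset.sum_nonneg fun i _ => sq_nonneg _)
    funext i
    have := heq i (Finset.mem_univ i)
    have := pow_eq_zero_iff (n := 2) (by norm_num) |>.mp this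
    linarith
end

section
/- Let v ∈ ℝ^g and r > 0 with ‖v‖_1 > r. Let u ∈ ℝ^g be the vector of absolute values |v_i| sorted in descending order, let S_j = Σ_{i=1}^{j} u_i be its cumulative sums, let ρ = max{ j ∈ {1, …, g} : u_j − (S_j − r)/j > 0 }, and set θ = (S_ρ − r)/ρ. Then θ > 0, Σ_{i=1}^{g} max(|v_i| − θ, 0) = r, and the vector w defined by w_i = sign(v_i) · max(|v_i| − θ, 0) is the Euclidean projection of v onto the L1-ball { u ∈ ℝ^g : ‖u‖_1 ≤ r }. (Correctness of the sorting-based L1-ball projection, Algorithm 1.) -/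
/-- **Correctness of the sorting-based `L1`-ball projection (Algorithm 1).**
Let `v ∈ ℝ^g` and `r > 0` with `‖v‖₁ > r`. Let `u` be the vector of absolute values
`|v i|` sorted in descending order (expressed as: `u` is antitone and a permutation of
`fun i => |v i|`), let `S j = Σ_{i < j} u i` be its cumulative sums, let
`ρ = max { j ∈ {1, …, g} : u_j - (S_j - r)/j > 0 }` (with `u_j` the `j`-th entry,
1-based), and set `θ = (S ρ - r)/ρ`. Then `θ > 0`, `Σ_i max (|v i| - θ) 0 = r`, and the
soft-thresholded vector `w i = sign (v i) * max (|v i| - θ) 0` is the Euclidean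
projection of `v` onto the `L1`-ball of radius `r` (the unique closest point of the
ball). -/
theorem sorting_based_l1_projection_correct
    (g : ℕ) (v : Fin g → ℝ) (r : ℝ) (hr : 0 < r) (hv : r < ∑ i, |v i|)
    (u : Fin g → ℝ)
    (hsorted : ∀ i j : Fin g, i ≤ j → u j ≤ u i)
    (hperm : ∃ σ : Equiv.Perm (Fin g), ∀ i, u i = |v (σ i)|)
    (S : ℕ → ℝ) (hS : ∀ j : ℕ, S j = ∑ i : Fin g, if (i : ℕ) < j then u i else 0)
    (ρ : ℕ) (hρ1 : 1 ≤ ρ) (hρg : ρ ≤ g)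
    (hρpos : (S ρ - r) / (ρ : ℝ) < u ⟨ρ - 1, by omega⟩)
    (hρmax : ∀ j : ℕ, (hj1 : 1 ≤ j) → (hjg : j ≤ g) →
      (S j - r) / (j : ℝ) < u ⟨j - 1, by omega⟩ → j ≤ ρ)
    (θ : ℝ) (hθ : θ = (S ρ - r) / (ρ : ℝ))
    (w : Fin g → ℝ) (hw : ∀ i, w i = Real.sign (v i) * max (|v i| - θ) 0) :
    0 < θ ∧
    (∑ i, max (|v i| - θ) 0) = r ∧
    (∑ i, |w i|) ≤ r ∧
    (∀ x : Fin g → ℝ, (∑ i, |x i|) ≤ r →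
      Real.sqrt (∑ i, (w i - v i) ^ 2) ≤ Real.sqrt (∑ i, (x i - v i) ^ 2)) ∧
    (∀ x : Fin g → ℝ, (∑ i, |x i|) ≤ r →
      Real.sqrt (∑ i, (x i - v i) ^ 2) ≤ Real.sqrt (∑ i, (w i - v i) ^ 2) → x = w) := by
  obtain ⟨σ, hσ⟩ := hperm
  have hρR : (0:ℝ) < (ρ : ℝ) := by exact_mod_cast hρ1
  have hρθ : (ρ:ℝ) * θ = S ρ - r := by rw [hθ]; field_simp
  -- the (ρ+1)-th entry is at most θ
  have hub : ∀ h : ρ < g, u ⟨ρ, h⟩ ≤ θ := by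
    intro h
    by_contra hlt
    push_neg at hlt
    have hS1 : S (ρ + 1) = S ρ + u ⟨ρ, h⟩ := by
      rw [hS, hS]
      have hpt : ∀ i : Fin g, (if (i:ℕ) < ρ + 1 then u i else 0)
          = (if (i:ℕ) < ρ then u i else 0) + (if i = ⟨ρ, h⟩ then u i else 0) := by
        intro i
        rcases lt_trichotomy (i:ℕ) ρ with h1 | h1 | h1
        · rw [if_pos (by omega), if_pos h1, if_neg (by
            intro he; rw [he] at h1; simp at h1), add_zero]
        · have : i = ⟨ρ, h⟩ := by ext; exact h1
          rw [if_pos (by omega), if_neg (by omega), if_pos this, zero_add, this]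
        · rw [if_neg (by omega), if_neg (by omega), if_neg (by
            intro he; rw [he] at h1; simp at h1), add_zero]
      rw [Finset.sum_congr rfl fun i _ => hpt i, Finset.sum_add_distrib]
      congr 1
      rw [Finset.sum_ite_eq' Finset.univ (⟨ρ, h⟩ : Fin g) u]
      simp
    have hkey : (S (ρ + 1) - r) / ((ρ + 1 : ℕ) : ℝ) < u ⟨ρ + 1 - 1, by omega⟩ := by
      have he : (⟨ρ + 1 - 1, by omega⟩ : Fin g) = ⟨ρ, h⟩ := rfl
      rw [he, div_lt_iff₀ (by positivity), hS1]
      push_cast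
      nlinarith [hlt]
    have := hρmax (ρ + 1) (by omega) (by omega) hkey
    omega
  -- pointwise description of the soft threshold on u
  have hθlt : θ < u ⟨ρ - 1, by omega⟩ := hθ ▸ hρpos
  have hpt : ∀ i : Fin g, max (u i - θ) 0 = if (i:ℕ) < ρ then u i - θ else 0 := by
    intro i
    by_cases hi : (i:ℕ) < ρ
    · rw [if_pos hi]
      have h1 : u ⟨ρ - 1, by omega⟩ ≤ u i :=
        hsorted i ⟨ρ - 1, by omega⟩ (by simp only [Fin.le_def]; omega)
      exact max_eq_left (by linarith)
    · have hg : ρ < g := lt_of_le_of_lt (not_lt.mp hi) i.isLt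
      have h2 : u i ≤ u ⟨ρ, hg⟩ := hsorted ⟨ρ, hg⟩ i (by simp only [Fin.le_def]; omega)
      have := hub hg
      rw [if_neg hi]
      exact max_eq_right (by linarith)
  have hsum_u : ∑ i : Fin g, max (u i - θ) 0 = r := by
    rw [Finset.sum_congr rfl fun i _ => hpt i]
    have hsplit : ∀ i : Fin g, (if (i:ℕ) < ρ then u i - θ else 0)
        = (if (i:ℕ) < ρ then u i else 0) - (if (i:ℕ) < ρ then θ else 0) := by
      intro i; by_cases hi : (i:ℕ) < ρ <;> simp [hi]
    rw [Finset.sum_congr rfl fun i _ => hsplit i, Finset.sum_sub_distrib, ← hS ρ]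
    have hcount : ∑ i : Fin g, (if (i:ℕ) < ρ then θ else 0) = (ρ:ℝ) * θ := by
      rw [Fin.sum_univ_eq_sum_range (fun i => if i < ρ then θ else 0) g]
      rw [Finset.sum_ite, Finset.sum_const, Finset.sum_const, smul_zero, add_zero]
      have : Finset.filter (fun x => x < ρ) (Finset.range g) = Finset.range ρ := by
        ext x; simp only [Finset.mem_filter, Finset.mem_range]; omega
      rw [this, Finset.card_range, nsmul_eq_mul]
    rw [hcount, hρθ]; ring
  -- transfer to v via the permutation
  have hperm_sum : ∀ F : ℝ → ℝ, ∑ i, F (u i) = ∑ i, F (|v i|) := by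
    intro F
    calc ∑ i, F (u i) = ∑ i, F (|v (σ i)|) := Finset.sum_congr rfl fun i _ => by rw [hσ]
      _ = ∑ i, F (|v i|) := Equiv.sum_comp σ (fun i => F (|v i|))
  have hsum_v : ∑ i, max (|v i| - θ) 0 = r := by
    rw [← hperm_sum (fun t => max (t - θ) 0)]; exact hsum_u
  -- θ is positive
  have hθpos : 0 < θ := by
    by_contra hc
    push_neg at hc
    have hle : ∀ i : Fin g, |v i| ≤ max (|v i| - θ) 0 := fun i =>
      le_max_of_le_left (by linarith [abs_nonneg (v i)])
    have := Finset.sum_le_sum (fun i (_ : i ∈ Finset.univ) => hle i)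
    rw [hsum_v] at this
    linarith
  -- |w i| = max (|v i| - θ) 0
  have hwabs : ∀ i, |w i| = max (|v i| - θ) 0 := by
    intro i
    rw [hw]
    rcases lt_trichotomy (v i) 0 with h | h | h
    · rw [Real.sign_of_neg h, abs_mul, abs_neg, abs_one, one_mul,
        abs_of_nonneg (le_max_right _ _)]
    · simp [h]
      have : |(0:ℝ)| - θ ≤ 0 := by simp; linarith
      simp [max_eq_right]; linarith
    · rw [Real.sign_of_pos h, one_mul, abs_of_nonneg (le_max_right _ _)]
  have hwsum : ∑ i, |w i| = r := by
    rw [Finset.sum_congr rfl fun i _ => hwabs i]; exact hsum_v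
  have hsab : ∀ i, Real.sign (v i) * |v i| = v i := by
    intro i
    rcases lt_trichotomy (v i) 0 with h | h | h
    · rw [Real.sign_of_neg h, abs_of_neg h]; ring
    · simp [h]
    · rw [Real.sign_of_pos h, abs_of_pos h]; ring
  -- the dual bound
  have ha : ∀ i, |v i - w i| ≤ θ := by
    intro i
    rcases le_or_gt (|v i|) θ with h | h
    · have hw0 : w i = 0 := by
        rw [hw, max_eq_right (by linarith), mul_zero]
      rw [hw0, sub_zero]; exact h
    · have hv0 : v i ≠ 0 := by
        intro h0; rw [h0] at h; simp at h; linarith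
      have hwi : w i = v i - Real.sign (v i) * θ := by
        rw [hw, max_eq_left (by linarith), mul_sub, hsab i]
      rw [hwi]
      have : v i - (v i - Real.sign (v i) * θ) = Real.sign (v i) * θ := by ring
      rw [this, abs_mul]
      rcases lt_or_gt_of_ne hv0 with hn | hp
      · rw [Real.sign_of_neg hn]; simp [abs_of_pos hθpos]
      · rw [Real.sign_of_pos hp]; simp [abs_of_pos hθpos]
  have hb : ∀ i, (v i - w i) * w i = θ * |w i| := by
    intro i
    rcases le_or_gt (|v i|) θ with h | h
    · have hw0 : w i = 0 := by rw [hw, max_eq_right (by linarith), mul_zero]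
      rw [hw0]; simp
    · have hv0 : v i ≠ 0 := by intro h0; rw [h0] at h; simp at h; linarith
      have hwi : w i = v i - Real.sign (v i) * θ := by
        rw [hw, max_eq_left (by linarith), mul_sub, hsab i]
      have hsq : Real.sign (v i) * Real.sign (v i) = 1 := by
        rcases lt_or_gt_of_ne hv0 with hn | hp
        · rw [Real.sign_of_neg hn]; ring
        · rw [Real.sign_of_pos hp]; ring
      have h1 : v i - w i = Real.sign (v i) * θ := by rw [hwi]; ring
      rw [h1, hwabs i, hw, max_eq_left (by linarith)]
      have : Real.sign (v i) * θ * (Real.sign (v i) * (|v i| - θ))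
          = (Real.sign (v i) * Real.sign (v i)) * (θ * (|v i| - θ)) := by ring
      rw [this, hsq, one_mul]
  have hkey : ∀ x : Fin g → ℝ, (∑ i, |x i|) ≤ r →
      ∑ i, (v i - w i) * (x i - w i) ≤ 0 := by
    intro x hx
    have h1 : ∑ i, (v i - w i) * x i ≤ θ * r := by
      calc ∑ i, (v i - w i) * x i ≤ ∑ i, θ * |x i| := by
            apply Finset.sum_le_sum
            intro i _
            calc (v i - w i) * x i ≤ |(v i - w i) * x i| := le_abs_self _
              _ = |v i - w i| * |x i| := abs_mul _ _
              _ ≤ θ * |x i| := mul_le_mul_of_nonneg_right (ha i) (abs_nonneg _)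
        _ = θ * ∑ i, |x i| := by rw [Finset.mul_sum]
        _ ≤ θ * r := mul_le_mul_of_nonneg_left hx hθpos.le
    have h2 : ∑ i, (v i - w i) * w i = θ * r := by
      rw [Finset.sum_congr rfl fun i _ => hb i, ← Finset.mul_sum, hwsum]
    have h3 : ∑ i, (v i - w i) * (x i - w i)
        = (∑ i, (v i - w i) * x i) - ∑ i, (v i - w i) * w i := by
      rw [← Finset.sum_sub_distrib]
      exact Finset.sum_congr rfl fun i _ => by ring
    rw [h3, h2]; linarith
  have hpyth : ∀ x : Fin g → ℝ, ∑ i, (x i - v i) ^ 2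
      = (∑ i, (w i - v i) ^ 2) + (∑ i, (x i - w i) ^ 2)
        - 2 * ∑ i, (v i - w i) * (x i - w i) := by
    intro x
    have hid : ∀ i : Fin g, (x i - v i) ^ 2
        = ((w i - v i) ^ 2 + (x i - w i) ^ 2) - 2 * ((v i - w i) * (x i - w i)) :=
      fun i => by ring
    rw [Finset.sum_congr rfl fun i _ => hid i, Finset.sum_sub_distrib,
      Finset.sum_add_distrib, ← Finset.mul_sum]
  have hsq_nonneg : ∀ (y : Fin g → ℝ), 0 ≤ ∑ i, (y i - v i) ^ 2 := fun y =>
    Finset.sum_nonneg fun i _ => sq_nonneg _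
  refine ⟨hθpos, hsum_v, hwsum.le, ?_, ?_⟩
  · intro x hx
    apply Real.sqrt_le_sqrt
    have := hkey x hx
    have h0 : 0 ≤ ∑ i, (x i - w i) ^ 2 := Finset.sum_nonneg fun i _ => sq_nonneg _
    rw [hpyth x]
    linarith
  · intro x hx hle
    have hle2 : ∑ i, (x i - v i) ^ 2 ≤ ∑ i, (w i - v i) ^ 2 :=
      (Real.sqrt_le_sqrt_iff (hsq_nonneg w)).mp hle
    have := hkey x hx
    have h0 : ∑ i, (x i - w i) ^ 2 ≤ 0 := by
      have := hpyth x
      linarith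
    have hz : ∑ i, (x i - w i) ^ 2 = 0 :=
      le_antisymm h0 (Finset.sum_nonneg fun i _ => sq_nonneg _)
    funext i
    have := (Finset.sum_eq_zero_iff_of_nonneg fun i _ => sq_nonneg (x i - w i)).mp hz
      i (Finset.mem_univ i)
    have : x i - w i = 0 := by
      have h := this
      nlinarith [sq_nonneg (x i - w i)]
    linarith
end
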